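/- For every matrix A ∈ C_n, every pair B, C ∈ P_n, and every additive map ζ : H_n → F·e_{1,n}, the map f(X) = {X, A} + X^τ B + C X^τ + ζ(X) maps H_n into H_n and is a commuting map: [f(X), X] = 0 for all X ∈ H_n. -/

import Mathlib

open Matrix

/-- `X` belongs to the Heisenberg algebra `H_n`: its only possibly nonzero entries lie
in the first row strictly above the diagonal or the last column strictly above the diagonal
(0-based indices: row 0 with column ≠ 0, or column `n-1` with row ≠ `n-1`). -/
def IsHeis {n : ℕ} {F : Type*} [Field F] (X : Matrix (Fin n) (Fin n) F) : Prop :=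
  ∀ i j : Fin n, ¬ ((i.val = 0 ∧ j.val ≠ 0) ∨ (j.val = n - 1 ∧ i.val ≠ n - 1)) → X i j = 0

/-- Anti-transpose: `(antiT X) i j = X (rev j) (rev i)`. -/
def antiT {n : ℕ} {F : Type*} [Field F] (X : Matrix (Fin n) (Fin n) F) :
    Matrix (Fin n) (Fin n) F :=
  Matrix.of fun i j => X j.rev i.rev

/-- `A ∈ C_n`: first and last rows and columns of `A` are zero. -/
def IsC {n : ℕ} {F : Type*} [Field F] (A : Matrix (Fin n) (Fin n) F) : Prop :=
  ∀ i j : Fin n, (i.val = 0 ∨ i.val = n - 1 ∨ j.val = 0 ∨ j.val = n - 1) → A i j = 0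

/-- `A ∈ P_n`: hollow skew-persymmetric matrices in `C_n`. -/
def IsP {n : ℕ} {F : Type*} [Field F] (A : Matrix (Fin n) (Fin n) F) : Prop :=
  IsC A ∧ (∀ i j : Fin n, antiT A i j = - A i j) ∧ (∀ i : Fin n, A i i.rev = 0)

/-!
For `X ∈ H_n` the square `X²` and every product `X M Y` with `X, Y ∈ H_n` and `M ∈ C_n`
are supported on the corner entry `(1, n)`, while `C_n` and `H_n` annihilate corner matrices on
the appropriate side. This kills `[{X, A}, X] = A X² - X² A`, `[ζ(X), X]`, `X X^τ B` and
`C X^τ X`, leaving `X^τ B X - X C X^τ`. Both terms vanish: a corner matrix is fixed by `τ`,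
while `(X^τ B X)^τ = X^τ B^τ X = -X^τ B X` since `τ` is an anti-automorphism.
-/

section CornerMatrices

variable {n : ℕ} {F : Type*} [Field F]

/-- `M ∈ F·e_{1,n}`. -/
def IsTopRightCorner (M : Matrix (Fin n) (Fin n) F) : Prop :=
  ∀ i j : Fin n, ¬ (i.val = 0 ∧ j.val = n - 1) → M i j = 0

lemma antiT_eq_transpose_submatrix (M : Matrix (Fin n) (Fin n) F) :
    antiT M = (M.submatrix Fin.rev Fin.rev)ᵀ :=
  rfl

@[simp]
lemma antiT_antiT (M : Matrix (Fin n) (Fin n) F) : antiT (antiT M) = M := by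
  ext i j
  simp [antiT]

lemma antiT_mul (M N : Matrix (Fin n) (Fin n) F) : antiT (M * N) = antiT N * antiT M := by
  simp only [antiT_eq_transpose_submatrix, ← transpose_mul]
  rw [← submatrix_mul_equiv M N Fin.rev Fin.revPerm Fin.rev]
  rfl

lemma IsP.antiT_eq_neg {B : Matrix (Fin n) (Fin n) F} (hB : IsP B) : antiT B = -B :=
  ext hB.2.1

lemma IsHeis.add {X Y : Matrix (Fin n) (Fin n) F} (hX : IsHeis X) (hY : IsHeis Y) :
    IsHeis (X + Y) := fun i j h => by
  simp [hX i j h, hY i j h]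

lemma IsHeis.antiT {X : Matrix (Fin n) (Fin n) F} (hX : IsHeis X) : IsHeis (antiT X) := by
  intro i j h
  apply hX
  simp only [Fin.val_rev]
  omega

lemma IsHeis.mul_isC {X A : Matrix (Fin n) (Fin n) F} (hX : IsHeis X) (hA : IsC A) :
    IsHeis (X * A) := by
  intro i j h
  refine (mul_apply ..).trans (Finset.sum_eq_zero fun k _ => ?_)
  by_cases hik : (i.val = 0 ∧ k.val ≠ 0) ∨ (k.val = n - 1 ∧ i.val ≠ n - 1)
  · rw [hA k j (by omega), mul_zero]
  · rw [hX i k hik, zero_mul]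

lemma IsC.mul_isHeis {A X : Matrix (Fin n) (Fin n) F} (hA : IsC A) (hX : IsHeis X) :
    IsHeis (A * X) := by
  intro i j h
  refine (mul_apply ..).trans (Finset.sum_eq_zero fun k _ => ?_)
  by_cases hkj : (k.val = 0 ∧ j.val ≠ 0) ∨ (j.val = n - 1 ∧ k.val ≠ n - 1)
  · rw [hA i k (by omega), zero_mul]
  · rw [hX k j hkj, mul_zero]

lemma IsHeis.isTopRightCorner_mul {X Y : Matrix (Fin n) (Fin n) F} (hX : IsHeis X)
    (hY : IsHeis Y) : IsTopRightCorner (X * Y) := by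
  intro i j h
  refine (mul_apply ..).trans (Finset.sum_eq_zero fun k _ => ?_)
  by_cases hik : (i.val = 0 ∧ k.val ≠ 0) ∨ (k.val = n - 1 ∧ i.val ≠ n - 1)
  · rw [hY k j (by omega), mul_zero]
  · rw [hX i k hik, zero_mul]

lemma IsTopRightCorner.isHeis (hn : 2 ≤ n) {M : Matrix (Fin n) (Fin n) F}
    (hM : IsTopRightCorner M) : IsHeis M :=
  fun i j h => hM i j (by omega)

lemma isTopRightCorner_smul_single (hn : 2 ≤ n) (a : F) :
    IsTopRightCorner (a • single (⟨0, by omega⟩ : Fin n) ⟨n - 1, by omega⟩ (1 : F)) := by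
  intro i j h
  simp only [Matrix.smul_apply, single_apply, smul_eq_mul]
  rw [if_neg (by rintro ⟨rfl, rfl⟩; exact h ⟨rfl, rfl⟩), mul_zero]

lemma IsTopRightCorner.antiT_eq_self {M : Matrix (Fin n) (Fin n) F}
    (hM : IsTopRightCorner M) : antiT M = M := by
  ext i j
  by_cases hij : i.val = 0 ∧ j.val = n - 1
  · have hi : i.rev = j := Fin.ext (by simp only [Fin.val_rev]; omega)
    have hj : j.rev = i := Fin.ext (by simp only [Fin.val_rev]; omega)
    simp [antiT, hi, hj]
  · rw [hM i j hij, antiT, of_apply, hM]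
    simp only [Fin.val_rev]
    omega

lemma IsTopRightCorner.isC_mul_eq_zero {A M : Matrix (Fin n) (Fin n) F}
    (hM : IsTopRightCorner M) (hA : IsC A) : A * M = 0 := by
  ext i j
  refine (mul_apply ..).trans (Finset.sum_eq_zero fun k _ => ?_)
  by_cases hk : k.val = 0
  · rw [hA i k (Or.inr (Or.inr (Or.inl hk))), zero_mul]
  · rw [hM k j (by omega), mul_zero]

lemma IsTopRightCorner.mul_isC_eq_zero {A M : Matrix (Fin n) (Fin n) F}
    (hM : IsTopRightCorner M) (hA : IsC A) : M * A = 0 := by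
  ext i j
  refine (mul_apply ..).trans (Finset.sum_eq_zero fun k _ => ?_)
  by_cases hk : k.val = n - 1
  · rw [hA k j (Or.inr (Or.inl hk)), mul_zero]
  · rw [hM i k (by omega), zero_mul]

lemma IsTopRightCorner.mul_isHeis_eq_zero {X M : Matrix (Fin n) (Fin n) F}
    (hM : IsTopRightCorner M) (hX : IsHeis X) : M * X = 0 := by
  ext i j
  refine (mul_apply ..).trans (Finset.sum_eq_zero fun k _ => ?_)
  by_cases hk : k.val = n - 1
  · rw [hX k j (by omega), mul_zero]
  · rw [hM i k (by omega), zero_mul]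

lemma IsTopRightCorner.isHeis_mul_eq_zero {X M : Matrix (Fin n) (Fin n) F}
    (hM : IsTopRightCorner M) (hX : IsHeis X) : X * M = 0 := by
  ext i j
  refine (mul_apply ..).trans (Finset.sum_eq_zero fun k _ => ?_)
  by_cases hk : k.val = 0
  · rw [hX i k (by omega), zero_mul]
  · rw [hM k j (by omega), mul_zero]

lemma IsTopRightCorner.eq_zero_of_antiT_eq_neg [CharZero F] {M : Matrix (Fin n) (Fin n) F}
    (hM : IsTopRightCorner M) (hM' : antiT M = -M) : M = 0 := by
  ext i j
  have h := congr_fun (congr_fun (hM.antiT_eq_self.symm.trans hM') i) j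
  exact CharZero.eq_neg_self_iff.mp h

lemma antiT_mul_mul_eq_zero [CharZero F] {X B : Matrix (Fin n) (Fin n) F} (hX : IsHeis X)
    (hB : IsC B) (hB' : antiT B = -B) : antiT X * B * X = 0 := by
  refine ((hX.antiT.mul_isC hB).isTopRightCorner_mul hX).eq_zero_of_antiT_eq_neg ?_
  rw [antiT_mul, antiT_mul, antiT_antiT, hB', Matrix.neg_mul, Matrix.mul_neg, Matrix.mul_assoc]

end CornerMatrices

theorem stmt14 {n : ℕ} (hn : 3 ≤ n) {F : Type*} [Field F] [CharZero F]
    (A B C : Matrix (Fin n) (Fin n) F)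
    (hA : IsC A) (hB : IsP B) (hC : IsP C)
    (ζ : Matrix (Fin n) (Fin n) F → Matrix (Fin n) (Fin n) F)
    (hζcen : ∀ X, IsHeis X →
      ∃ a : F, ζ X = a • Matrix.single ⟨0, by omega⟩ ⟨n - 1, by omega⟩ (1 : F))
    (f : Matrix (Fin n) (Fin n) F → Matrix (Fin n) (Fin n) F)
    (hf : ∀ X, f X = (X * A + A * X) + antiT X * B + C * antiT X + ζ X) :
    ∀ X, IsHeis X → IsHeis (f X) ∧ f X * X = X * f X := by
  intro X hX
  obtain ⟨a, hζX⟩ := hζcen X hX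
  have hζ : IsTopRightCorner (ζ X) := hζX ▸ isTopRightCorner_smul_single (by omega) a
  have hXX : IsTopRightCorner (X * X) := hX.isTopRightCorner_mul hX
  have hXXτ : IsTopRightCorner (X * antiT X) := hX.isTopRightCorner_mul hX.antiT
  have hXτX : IsTopRightCorner (antiT X * X) := hX.antiT.isTopRightCorner_mul hX
  have hXτBX : antiT X * B * X = 0 := antiT_mul_mul_eq_zero hX hB.1 hB.antiT_eq_neg
  have hXCXτ : X * C * antiT X = 0 := by
    simpa using antiT_mul_mul_eq_zero hX.antiT hC.1 hC.antiT_eq_neg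
  refine ⟨?_, ?_⟩
  · rw [hf]
    exact ((((hX.mul_isC hA).add (hA.mul_isHeis hX)).add (hX.antiT.mul_isC hB.1)).add
      (hC.1.mul_isHeis hX.antiT)).add (hζ.isHeis (by omega))
  · have hcomm : f X * X - X * f X = A * (X * X) - X * X * A + antiT X * B * X
        - X * antiT X * B + C * (antiT X * X) - X * C * antiT X + ζ X * X - X * ζ X := by
      rw [hf]
      noncomm_ring
    rw [← sub_eq_zero, hcomm, hXX.isC_mul_eq_zero hA, hXX.mul_isC_eq_zero hA, hXτBX,
      hXXτ.mul_isC_eq_zero hB.1, hXτX.isC_mul_eq_zero hC.1, hXCXτ, hζ.mul_isHeis_eq_zero hX,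
      hζ.isHeis_mul_eq_zero hX]
    simp
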